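/- arXiv:2412.02007 — 2 statements merged into one kernel-verified Lean document; each statement's English description precedes it below -/
import Mathlib

section
/- Let c ≥ 0 be a real number and let f be a holomorphic function on a neighborhood of 0 in ℂ, not identically zero. Then the integral ∫_{|z|<r} |f(z)|² |z|^{-2c} dλ(z) (with respect to Lebesgue measure λ) is finite for some r > 0 if and only if f vanishes at 0 to order at least ⌊c⌋. -/
/-!
Write `f = z ^ n • g` near `0` with `g 0 ≠ 0`, where `n` is the order of vanishing of `f`. On a
punctured neighbourhood of `0` the integrand `‖f‖² ‖z‖^(-2c)` is then comparable to
`‖z‖ ^ (2n - 2c)`, and a radial power `‖z‖ ^ t` is integrable near `0` in the real plane iff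
`-2 < t`. Hence integrability holds iff `c < n + 1`, that is iff `⌊c⌋ ≤ n`.
-/

open MeasureTheory Filter Topology Asymptotics Metric Set

theorem integrableAtFilter_nhds_iff_exists_ball {α ε : Type*} [PseudoMetricSpace α]
    [MeasurableSpace α] [TopologicalSpace ε] [ContinuousENorm ε] {f : α → ε}
    {μ : Measure α} {x : α} :
    IntegrableAtFilter f (𝓝 x) μ ↔ ∃ r > 0, IntegrableOn f (ball x r) μ :=
  nhds_basis_ball.exists_iff fun _ _ hst h ↦ h.mono_set hst

theorem nhds_inf_ae_le_nhdsNE {α : Type*} [TopologicalSpace α] [MeasurableSpace α]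
    {μ : Measure α} [NullSingletonClass μ] (x : α) : 𝓝 x ⊓ ae μ ≤ 𝓝[≠] x :=
  inf_le_inf_left _ <| le_principal_iff.mpr <| compl_mem_ae_iff.mpr <| measure_singleton x

theorem Asymptotics.IsTheta.integrableAtFilter_iff {α E F : Type*} [MeasurableSpace α]
    [NormedAddCommGroup E] [NormedAddCommGroup F] {f : α → E} {g : α → F} {l : Filter α}
    [l.IsMeasurablyGenerated] {μ : Measure α} (h : f =Θ[l] g)
    (hf : StronglyMeasurableAtFilter f l μ) (hg : StronglyMeasurableAtFilter g l μ) :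
    IntegrableAtFilter f l μ ↔ IntegrableAtFilter g l μ :=
  ⟨h.isBigO_symm.integrableAtFilter hg, h.isBigO.integrableAtFilter hf⟩

section NormRpow

variable {E : Type*} [NormedAddCommGroup E] [NormedSpace ℝ E] [FiniteDimensional ℝ E]
  [MeasurableSpace E] [BorelSpace E] [Nontrivial E] (μ : Measure E) [μ.IsAddHaarMeasure]

theorem integrableOn_ball_norm_rpow_iff {r t : ℝ} (hr : 0 < r) :
    IntegrableOn (fun x : E ↦ ‖x‖ ^ t) (ball 0 r) μ ↔
      -(Module.finrank ℝ E : ℝ) < t := by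
  have hd : 1 ≤ Module.finrank ℝ E := Module.finrank_pos
  calc
    _ ↔ IntegrableOn (fun y : ℝ ↦ y ^ ((Module.finrank ℝ E - 1 : ℕ) + t)) (Ioo 0 r) := by
      rw [integrableOn_fun_norm_addHaar μ (f := fun y ↦ y ^ t)]
      refine integrableOn_congr_fun (fun y hy ↦ ?_) measurableSet_Ioo
      rw [smul_eq_mul, Real.rpow_add hy.1, Real.rpow_natCast]
    _ ↔ _ := by
      rw [intervalIntegral.integrableOn_Ioo_rpow_iff hr]
      push_cast [hd]
      constructor <;> intro h <;> linarith

theorem integrableAtFilter_nhds_norm_rpow_iff {t : ℝ} :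
    IntegrableAtFilter (fun x : E ↦ ‖x‖ ^ t) (𝓝 0) μ ↔
      -(Module.finrank ℝ E : ℝ) < t := by
  rw [integrableAtFilter_nhds_iff_exists_ball]
  exact ⟨fun ⟨r, hr, h⟩ ↦ (integrableOn_ball_norm_rpow_iff μ hr).mp h,
    fun h ↦ ⟨1, one_pos, (integrableOn_ball_norm_rpow_iff μ one_pos).mpr h⟩⟩

end NormRpow

section AnalyticOrder

variable {𝕜 E : Type*} [NontriviallyNormedField 𝕜] [NormedAddCommGroup E] [NormedSpace 𝕜 E]
  {f : 𝕜 → E}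

theorem AnalyticAt.isTheta_pow_analyticOrderNatAt {z₀ : 𝕜} (hf : AnalyticAt 𝕜 f z₀)
    (h : analyticOrderAt f z₀ ≠ ⊤) :
    f =Θ[𝓝 z₀] fun z ↦ (z - z₀) ^ analyticOrderNatAt f z₀ := by
  obtain ⟨g, hg, hg₀, hfg⟩ :=
    hf.analyticOrderAt_eq_natCast.mp (Nat.cast_analyticOrderNatAt h).symm
  have hg_one : g =Θ[𝓝 z₀] fun _ ↦ (1 : 𝕜) :=
    ((isEquivalent_const_iff_tendsto hg₀).mpr hg.continuousAt.tendsto).isTheta.trans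
      (isTheta_const_const hg₀ one_ne_zero)
  have hΘ := (isTheta_refl (fun z ↦ (z - z₀) ^ analyticOrderNatAt f z₀) _).smul hg_one
  exact EventuallyEq.trans_isTheta hfg (by simpa only [smul_eq_mul, mul_one] using hΘ)

theorem AnalyticAt.norm_sq_mul_norm_rpow_isTheta (hf : AnalyticAt 𝕜 f 0)
    (h : analyticOrderAt f 0 ≠ ⊤) (s : ℝ) :
    (fun z ↦ ‖f z‖ ^ 2 * ‖z‖ ^ s) =Θ[𝓝[≠] 0]
      fun z ↦ ‖z‖ ^ (2 * analyticOrderNatAt f 0 + s) := by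
  have hΘ := ((hf.isTheta_pow_analyticOrderNatAt h).norm_left.norm_right.pow 2).mul
    (isTheta_refl (fun z : 𝕜 ↦ ‖z‖ ^ s) _)
  refine (hΘ.mono nhdsWithin_le_nhds).trans_eventuallyEq ?_
  filter_upwards [self_mem_nhdsWithin] with z hz
  rw [Real.rpow_add (norm_pos_iff.mpr hz), sub_zero, norm_pow, ← pow_mul, mul_comm 2]
  norm_cast

end AnalyticOrder

/-- One-variable multiplier ideal computation: for `c ≥ 0` and `f` holomorphic
near `0 ∈ ℂ` and not identically zero, `∫_{|z|<r} |f|² |z|^{-2c} dλ < ∞` for some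
`r > 0` iff `f` vanishes at `0` to order at least `⌊c⌋`. -/
theorem stmt_0 (c : ℝ) (hc : 0 ≤ c) (f : ℂ → ℂ) (U : Set ℂ)
    (hU : IsOpen U) (h0 : (0 : ℂ) ∈ U) (hf : AnalyticOnNhd ℂ f U)
    (hne : ∃ᶠ z in nhds (0 : ℂ), f z ≠ 0) :
    (∃ r > (0 : ℝ), IntegrableOn
        (fun z : ℂ => ‖f z‖ ^ 2 * ‖z‖ ^ (-(2 * c)))
        (Metric.ball (0 : ℂ) r) volume) ↔
    ∃ g : ℂ → ℂ, AnalyticAt ℂ g 0 ∧ ∀ᶠ z in nhds (0 : ℂ), f z = z ^ (⌊c⌋₊) * g z := by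
  have hord : analyticOrderAt f 0 ≠ ⊤ := fun h ↦
    hne <| (analyticOrderAt_eq_top.mp h).mono fun _ hz hfz ↦ hfz hz
  -- `𝓝[≠] 0` is not known to be measurably generated; the finer `𝓝 0 ⊓ ae volume` is.
  have hmeas : StronglyMeasurableAtFilter (fun z : ℂ ↦ ‖f z‖ ^ 2 * ‖z‖ ^ (-(2 * c)))
      (𝓝 0 ⊓ ae volume) volume :=
    StronglyMeasurableAtFilter.filter_mono ⟨U, hU.mem_nhds h0,
      ((hf.continuousOn.norm.pow 2).aestronglyMeasurable hU.measurableSet).mul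
        (by fun_prop : Measurable fun z : ℂ ↦ ‖z‖ ^ (-(2 * c))).aestronglyMeasurable⟩
      inf_le_left
  have hΘ := (hf 0 h0).norm_sq_mul_norm_rpow_isTheta hord (-(2 * c)) |>.mono
    (nhds_inf_ae_le_nhdsNE (μ := volume) 0)
  have hintegrable : (∃ r > (0 : ℝ),
      IntegrableOn (fun z : ℂ ↦ ‖f z‖ ^ 2 * ‖z‖ ^ (-(2 * c))) (ball 0 r) volume) ↔
      c < analyticOrderNatAt f 0 + 1 := by
    rw [← integrableAtFilter_nhds_iff_exists_ball, ← IntegrableAtFilter.inf_ae_iff,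
        hΘ.integrableAtFilter_iff hmeas
          (measurable_norm.pow_const _).aestronglyMeasurable.stronglyMeasurableAtFilter,
        IntegrableAtFilter.inf_ae_iff, integrableAtFilter_nhds_norm_rpow_iff,
        Complex.finrank_real_complex]
    constructor <;> intro h <;> push_cast at h ⊢ <;> linarith
  have hvanishing :
      (∃ g : ℂ → ℂ, AnalyticAt ℂ g 0 ∧ ∀ᶠ z in 𝓝 0, f z = z ^ ⌊c⌋₊ * g z) ↔
        ⌊c⌋₊ ≤ analyticOrderNatAt f 0 := by
    rw [← ENat.natCast_le_natCast, Nat.cast_analyticOrderNatAt hord,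
      natCast_le_analyticOrderAt (hf 0 h0)]
    simp only [sub_zero, smul_eq_mul]
  rw [hintegrable, hvanishing, ← Nat.lt_add_one_iff, Nat.floor_lt hc, Nat.cast_add_one]
end

section
/- Let U ⊆ ℂ be a nonempty connected open set and let f, g be holomorphic functions on U, neither identically zero. Suppose that for every z ∈ U the vanishing orders agree: ord_z f = ord_z g. Then there exists a holomorphic function h on U with h(z) ≠ 0 for all z ∈ U such that f = h·g on U. -/
/-!
Since `f` is not identically zero on the connected set `U`, the identity theorem makes its
vanishing orders finite, hence so are those of `g`. The quotient `f / g` is then meromorphic on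
`U` with order `ord f - ord g = 0` at every point, so its normal form (removable singularities
filled in) is analytic and nowhere zero on `U`. It agrees with `f / g` wherever `g ≠ 0`, and where
`g` vanishes so does `f`.
-/

section

variable {𝕜 : Type*} [NontriviallyNormedField 𝕜] {f g q : 𝕜 → 𝕜} {U : Set 𝕜} {x : 𝕜}

theorem AnalyticAt.meromorphicOrderAt_div_eq_zero (hf : AnalyticAt 𝕜 f x)
    (hg : AnalyticAt 𝕜 g x) (hfg : analyticOrderAt f x = analyticOrderAt g x)
    (hg_fin : analyticOrderAt g x ≠ ⊤) :
    meromorphicOrderAt (f / g) x = 0 := by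
  lift analyticOrderAt g x to ℕ using hg_fin with n hn
  rw [meromorphicOrderAt_div hf.meromorphicAt hg.meromorphicAt, hf.meromorphicOrderAt_eq,
    hg.meromorphicOrderAt_eq, hfg, ← hn]
  simp

theorem MeromorphicOn.analyticAt_toMeromorphicNFOn (hq : MeromorphicOn q U) (hx : x ∈ U)
    (hq_nonneg : 0 ≤ meromorphicOrderAt q x) :
    AnalyticAt 𝕜 (toMeromorphicNFOn q U) x :=
  (meromorphicNFOn_toMeromorphicNFOn q U hx).meromorphicOrderAt_nonneg_iff_analyticAt.1 <| by
    rwa [meromorphicOrderAt_toMeromorphicNFOn hq hx]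

theorem MeromorphicOn.toMeromorphicNFOn_ne_zero (hq : MeromorphicOn q U) (hx : x ∈ U)
    (hq_zero : meromorphicOrderAt q x = 0) :
    toMeromorphicNFOn q U x ≠ 0 :=
  (meromorphicNFOn_toMeromorphicNFOn q U hx).meromorphicOrderAt_eq_zero_iff.1 <| by
    rwa [meromorphicOrderAt_toMeromorphicNFOn hq hx]

theorem AnalyticAt.eq_toMeromorphicNFOn_div_mul (hf : AnalyticAt 𝕜 f x) (hg : AnalyticAt 𝕜 g x)
    (hfg : analyticOrderAt f x = analyticOrderAt g x) (hq : MeromorphicOn (f / g) U)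
    (hx : x ∈ U) :
    f x = toMeromorphicNFOn (f / g) U x * g x := by
  by_cases hgx : g x = 0
  · have hfx : f x = 0 := by
      rwa [← hf.analyticOrderAt_ne_zero, hfg, hg.analyticOrderAt_ne_zero]
    simp [hfx, hgx]
  · have hq_nf : MeromorphicNFAt (f / g) x := (hf.div hg hgx).meromorphicNFAt
    rw [toMeromorphicNFOn_eq_toMeromorphicNFAt hq hx, toMeromorphicNFAt_eq_self.2 hq_nf,
      Pi.div_apply, div_mul_cancel₀ _ hgx]

end

theorem stmt_15_general (U : Set ℂ) (hconn : IsConnected U)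
    (f g : ℂ → ℂ) (hf : AnalyticOnNhd ℂ f U) (hg : AnalyticOnNhd ℂ g U)
    (hf0 : ∃ z ∈ U, f z ≠ 0)
    (hord : ∀ z (hz : z ∈ U), analyticOrderAt f z = analyticOrderAt g z) :
    ∃ h : ℂ → ℂ, AnalyticOnNhd ℂ h U ∧ (∀ z ∈ U, h z ≠ 0) ∧
      ∀ z ∈ U, f z = h z * g z := by
  obtain ⟨w, hwU, hfw⟩ := hf0
  have hg_fin : ∀ z ∈ U, analyticOrderAt g z ≠ ⊤ := fun z hz ↦
    hord z hz ▸ hf.analyticOrderAt_ne_top_of_isPreconnected hconn.isPreconnected hwU hz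
      (by simp [(hf w hwU).analyticOrderAt_eq_zero.2 hfw])
  have hq : MeromorphicOn (f / g) U := hf.meromorphicOn.div hg.meromorphicOn
  have hq_zero : ∀ z ∈ U, meromorphicOrderAt (f / g) z = 0 := fun z hz ↦
    (hf z hz).meromorphicOrderAt_div_eq_zero (hg z hz) (hord z hz) (hg_fin z hz)
  exact ⟨toMeromorphicNFOn (f / g) U,
    fun z hz ↦ hq.analyticAt_toMeromorphicNFOn hz (hq_zero z hz).ge,
    fun z hz ↦ hq.toMeromorphicNFOn_ne_zero hz (hq_zero z hz),
    fun z hz ↦ (hf z hz).eq_toMeromorphicNFOn_div_mul (hg z hz) (hord z hz) hq hz⟩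

/-- Two holomorphic functions on a connected open set `U ⊆ ℂ`, neither
identically zero, with the same vanishing order at every point, differ by a
nowhere-vanishing holomorphic factor. -/
theorem stmt_15 (U : Set ℂ) (hU : IsOpen U) (hconn : IsConnected U)
    (f g : ℂ → ℂ) (hf : AnalyticOnNhd ℂ f U) (hg : AnalyticOnNhd ℂ g U)
    (hf0 : ∃ z ∈ U, f z ≠ 0) (hg0 : ∃ z ∈ U, g z ≠ 0)
    (hord : ∀ z (hz : z ∈ U), analyticOrderAt f z = analyticOrderAt g z) :
    ∃ h : ℂ → ℂ, AnalyticOnNhd ℂ h U ∧ (∀ z ∈ U, h z ≠ 0) ∧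
      ∀ z ∈ U, f z = h z * g z :=
  stmt_15_general U hconn f g hf hg hf0 hord
end
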